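/- For every integer k ≥ 2, the series Σ_{n=2}^∞ φ(n)·(k−1)²/(k^n − 1) converges and equals 1, where φ is Euler's totient function. -/

import Mathlib

open Nat Set Finset

/-- For every integer `k ≥ 2`,
`Σ_{n=2}^∞ φ(n)·(k−1)²/(k^n − 1) = 1` (and the series converges). -/
theorem totient_series_eq_one (k : ℕ) (hk : 2 ≤ k) :
    HasSum (fun n : ℕ =>
      (Nat.totient (n + 2) : ℝ) * ((k : ℝ) - 1) ^ 2 / ((k : ℝ) ^ (n + 2) - 1)) 1 := by
  have hk1 : (1 : ℝ) < (k : ℝ) := by exact_mod_cast lt_of_lt_of_le one_lt_two hk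
  have hk0 : (0 : ℝ) < (k : ℝ) := lt_trans one_pos hk1
  set r : ℝ := (k : ℝ)⁻¹ with hr_def
  have hr0 : 0 < r := inv_pos.mpr hk0
  have hr1 : r < 1 := by
    rw [hr_def, inv_lt_one_iff₀]; right; exact hk1
  -- the double series
  set F : ℕ × ℕ → ℝ := fun p =>
    if p.1 = 0 ∨ p.2 = 0 then 0 else (Nat.totient p.1 : ℝ) * r ^ (p.1 * p.2) with hF_def
  have hF0 : ∀ p, 0 ≤ F p := by
    intro p
    by_cases h : p.1 = 0 ∨ p.2 = 0 <;> simp [hF_def, h] <;> positivity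
  -- summability of F by comparison with a product of geometric-type series
  set G : ℕ × ℕ → ℝ := fun p => ((p.1 : ℝ) * r ^ p.1 * r⁻¹) * r ^ p.2 with hG_def
  have hGsum : Summable G := by
    have h1 : Summable (fun n : ℕ => (n : ℝ) * r ^ n * r⁻¹) := by
      have := summable_pow_mul_geometric_of_norm_lt_one (R := ℝ) 1
        (r := r) (by rw [Real.norm_eq_abs, abs_of_pos hr0]; exact hr1)
      simpa [pow_one] using this.mul_right r⁻¹
    have h2 : Summable (fun m : ℕ => r ^ m) := summable_geometric_of_lt_one hr0.le hr1
    exact h1.mul_of_nonneg h2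
      (fun n => by positivity) (fun m => by positivity)
  have hFle : ∀ p, F p ≤ G p := by
    rintro ⟨a, b⟩
    rcases Nat.eq_zero_or_pos a with ha | ha
    · simp [hF_def, hG_def, ha]
    rcases Nat.eq_zero_or_pos b with hb | hb
    · simp [hF_def, hG_def, hb]; positivity
    have hab : F (a, b) = (Nat.totient a : ℝ) * r ^ (a * b) := by
      simp [hF_def, ha.ne', hb.ne']
    rw [hab]
    have h1 : (Nat.totient a : ℝ) * r ^ (a * b) ≤ (a : ℝ) * r ^ (a * b) := by
      apply mul_le_mul_of_nonneg_right _ (by positivity)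
      exact_mod_cast Nat.totient_le a
    refine h1.trans ?_
    obtain ⟨a', rfl⟩ : ∃ a', a = a' + 1 := ⟨a - 1, by omega⟩
    obtain ⟨b', rfl⟩ : ∃ b', b = b' + 1 := ⟨b - 1, by omega⟩
    have hexp : (a' + 1) + (b' + 1) - 1 ≤ (a' + 1) * (b' + 1) := by
      have h := Nat.le_add_left (a' + b' + 1) (a' * b')
      calc (a' + 1) + (b' + 1) - 1 = a' + b' + 1 := by omega
        _ ≤ a' * b' + (a' + b' + 1) := h
        _ = (a' + 1) * (b' + 1) := by ring
    set a := a' + 1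
    set b := b' + 1
    have h2 : r ^ (a * b) ≤ r ^ (a + b - 1) :=
      pow_le_pow_of_le_one hr0.le hr1.le hexp
    have h3 : r ^ (a + b - 1) = r ^ a * r⁻¹ * r ^ b := by
      rw [show a + b - 1 = a - 1 + b by omega, pow_add,
        pow_sub₀ r hr0.ne' (by omega : 1 ≤ a), pow_one]
    calc (a : ℝ) * r ^ (a * b) ≤ (a : ℝ) * r ^ (a + b - 1) := by
          exact mul_le_mul_of_nonneg_left h2 (by positivity)
      _ = (a : ℝ) * r ^ a * r⁻¹ * r ^ b := by rw [h3]; ring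
  have hFsum : Summable F := Summable.of_nonneg_of_le hF0 hFle hGsum
  set A : ℝ := ∑' p, F p with hA_def
  have hA : HasSum F A := hFsum.hasSum
  -- fibers over the product map have sums N * r^N
  have hfib : ∀ N : ℕ, (∑' p : (fun p : ℕ × ℕ => p.1 * p.2) ⁻¹' {N}, F p) = (N : ℝ) * r ^ N := by
    intro N
    rcases Nat.eq_zero_or_pos N with hN | hN
    · subst hN
      have : ∀ p : (fun p : ℕ × ℕ => p.1 * p.2) ⁻¹' {(0 : ℕ)}, F p = 0 := by
        rintro ⟨⟨a, b⟩, hp⟩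
        simp only [Set.mem_preimage, Set.mem_singleton_iff, Nat.mul_eq_zero] at hp
        rcases hp with h | h <;> simp [hF_def, h]
      simp [this]
    · have hset : (fun p : ℕ × ℕ => p.1 * p.2) ⁻¹' {N} = ↑(N.divisorsAntidiagonal) := by
        ext p; simp [Nat.mem_divisorsAntidiagonal, hN.ne']
      rw [hset, Finset.tsum_subtype' N.divisorsAntidiagonal F]
      have hcong : ∀ p ∈ N.divisorsAntidiagonal, F p = (Nat.totient p.1 : ℝ) * r ^ N := by
        intro p hp
        obtain ⟨h1, h2⟩ := Nat.ne_zero_of_mem_divisorsAntidiagonal hp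
        have := (Nat.mem_divisorsAntidiagonal.mp hp).1
        simp [hF_def, h1, h2, this]
      rw [Finset.sum_congr rfl hcong]
      rw [show (∑ p ∈ N.divisorsAntidiagonal, (Nat.totient p.1 : ℝ) * r ^ N)
          = ∑ i ∈ N.divisors, (Nat.totient i : ℝ) * r ^ N from
        Nat.sum_divisorsAntidiagonal (fun i _ => (Nat.totient i : ℝ) * r ^ N)]
      rw [← Finset.sum_mul, ← Nat.cast_sum, Nat.sum_totient]
  have hA2 : HasSum (fun N : ℕ => (N : ℝ) * r ^ N) A := by
    have := hA.tsum_fiberwise (fun p => p.1 * p.2)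
    simpa [hfib] using this
  have hAval : A = r / (1 - r) ^ 2 :=
    hA2.unique (hasSum_coe_mul_geometric_of_norm_lt_one
      (by rw [Real.norm_eq_abs, abs_of_pos hr0]; exact hr1))
  -- row fibers
  have hrow : ∀ n : ℕ, HasSum (fun m => F (n, m))
      ((Nat.totient n : ℝ) * (r ^ n / (1 - r ^ n))) := by
    intro n
    rcases Nat.eq_zero_or_pos n with hn | hn
    · subst hn
      simpa [hF_def] using hasSum_zero
    · have hrn0 : 0 ≤ r ^ n := by positivity
      have hrn1 : r ^ n < 1 := pow_lt_one₀ hr0.le hr1 hn.ne'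
      have hgeo : HasSum (fun m : ℕ => (r ^ n) ^ m) (1 - r ^ n)⁻¹ :=
        hasSum_geometric_of_lt_one hrn0 hrn1
      have h1 : HasSum (fun m : ℕ => (Nat.totient n : ℝ) * r ^ n * (r ^ n) ^ m)
          ((Nat.totient n : ℝ) * r ^ n * (1 - r ^ n)⁻¹) := hgeo.mul_left _
      have heq : ∀ m : ℕ, F (n, m + 1) = (Nat.totient n : ℝ) * r ^ n * (r ^ n) ^ m := by
        intro m
        have hcond : ¬(n = 0 ∨ m + 1 = 0) := by omega
        simp only [hF_def, if_neg hcond]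
        rw [show n * (m + 1) = n + n * m by ring, pow_add, pow_mul]
        ring
      have h2 : HasSum (fun m : ℕ => F (n, m + 1))
          ((Nat.totient n : ℝ) * r ^ n * (1 - r ^ n)⁻¹) := by
        simpa [heq] using h1
      have h3 := (hasSum_nat_add_iff (f := fun m => F (n, m)) 1).mp h2
      have hzero : F (n, 0) = 0 := by simp [hF_def]
      simp only [Finset.range_one, Finset.sum_singleton, hzero, add_zero] at h3
      rw [div_eq_mul_inv, ← mul_assoc]; exact h3
  have hmain : HasSum (fun n : ℕ => (Nat.totient n : ℝ) * (r ^ n / (1 - r ^ n))) A :=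
    hA.prod_fiberwise hrow
  -- rewrite in terms of k
  have hkn : ∀ n : ℕ, r ^ n / (1 - r ^ n) = 1 / ((k : ℝ) ^ n - 1) := by
    intro n
    rcases Nat.eq_zero_or_pos n with hn | hn
    · subst hn; simp
    · have hK1 : (1 : ℝ) < (k : ℝ) ^ n := one_lt_pow₀ hk1 hn.ne'
      have hK0 : ((k : ℝ) ^ n) ≠ 0 := by positivity
      have hKm1 : ((k : ℝ) ^ n - 1) ≠ 0 := by linarith
      rw [hr_def, inv_pow]
      field_simp
  have hS : HasSum (fun n : ℕ => (Nat.totient n : ℝ) / ((k : ℝ) ^ n - 1))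
      ((k : ℝ) / ((k : ℝ) - 1) ^ 2) := by
    have : A = (k : ℝ) / ((k : ℝ) - 1) ^ 2 := by
      have hkm1 : ((k : ℝ) - 1) ≠ 0 := by intro h; linarith
      have hinv : (1 : ℝ) - (k : ℝ)⁻¹ ≠ 0 := by
        have : (k : ℝ)⁻¹ < 1 := hr_def ▸ hr1
        intro h; linarith
      rw [hAval, hr_def]
      field_simp
    rw [← this]
    refine hmain.congr_fun fun n => ?_
    rw [hkn n, mul_one_div]
  -- drop the first two terms
  have hkm1 : ((k : ℝ) - 1) ≠ 0 := by intro h; linarith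
  set S : ℝ := (k : ℝ) / ((k : ℝ) - 1) ^ 2 with hS_def
  have hsum2 : ∑ i ∈ Finset.range 2, (Nat.totient i : ℝ) / ((k : ℝ) ^ i - 1)
      = 1 / ((k : ℝ) - 1) := by
    simp [Finset.sum_range_succ]
  have hshift : HasSum (fun n : ℕ => (Nat.totient (n + 2) : ℝ) / ((k : ℝ) ^ (n + 2) - 1))
      (S - 1 / ((k : ℝ) - 1)) := by
    rw [← hsum2]
    apply (hasSum_nat_add_iff (f := fun n => (Nat.totient n : ℝ) / ((k : ℝ) ^ n - 1)) 2).mpr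
    rwa [sub_add_cancel]
  have hval : S - 1 / ((k : ℝ) - 1) = 1 / ((k : ℝ) - 1) ^ 2 := by
    rw [hS_def]
    field_simp
    ring
  rw [hval] at hshift
  have hfinal := hshift.mul_right (((k : ℝ) - 1) ^ 2)
  have hone : 1 / ((k : ℝ) - 1) ^ 2 * ((k : ℝ) - 1) ^ 2 = 1 :=
    one_div_mul_cancel (pow_ne_zero 2 hkm1)
  rw [hone] at hfinal
  refine hfinal.congr_fun fun n => ?_
  ring
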